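/- arXiv:1701.07498 — 2 statements merged into one kernel-verified Lean document; each statement's English description precedes it below -/
import Mathlib

section
/- There exists an optimal schedule σ* such that (a) for any two jobs J_i, J_j with i < j that are both in the earlier schedule of σ*, S_i(σ*) < S_j(σ*), and (b) for any two jobs J_i, J_j with i < j that are both in the later schedule of σ*, S_i(σ*) < S_j(σ*); that is, both the earlier-schedule jobs and the later-schedule jobs appear in the same (WSPT) order as in π*. -/
open Finset

variable (n : ℕ)

/-- Completion time of job `j` in the original WSPT schedule `π*`:
`C_j(π*) = p_1 + ⋯ + p_j`. -/
def Corig (p : Fin n → ℤ) (j : Fin n) : ℤ :=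
  ∑ i ∈ Finset.univ.filter (fun i => i ≤ j), p i

/-- Start time of job `j` in the original schedule `π*`. -/
def Sorig (p : Fin n → ℤ) (j : Fin n) : ℤ :=
  Corig n p j - p j

/-- A feasible schedule: integer start times `σ j ≥ 0`, pairwise disjoint open
processing intervals, and every job either completes by `T1` (earlier schedule)
or starts at or after `T2` (later schedule). -/
def Feasible (p : Fin n → ℤ) (T1 T2 : ℤ) (σ : Fin n → ℤ) : Prop :=
  (∀ j, 0 ≤ σ j) ∧
  (∀ i j, i ≠ j → σ i + p i ≤ σ j ∨ σ j + p j ≤ σ i) ∧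
  (∀ j, σ j + p j ≤ T1 ∨ T2 ≤ σ j)

/-- Time deviation of job `j`: `Δ_j(σ) = |C_j(σ) − C_j(π*)|`. -/
def Dev (p : Fin n → ℤ) (σ : Fin n → ℤ) (j : Fin n) : ℤ :=
  |σ j + p j - Corig n p j|

/-- Maximum time deviation `Δ_max(σ) = max_{1≤j≤n} Δ_j(σ)` (all deviations are
nonnegative, so folding `max` from `0` gives the maximum when `n ≥ 1`). -/
def Dmax (p : Fin n → ℤ) (σ : Fin n → ℤ) : ℤ :=
  Finset.fold max 0 (Dev n p σ) Finset.univ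

/-- Admissible: feasible with `Δ_max(σ) ≤ k`. -/
def Admissible (p : Fin n → ℤ) (T1 T2 k : ℤ) (σ : Fin n → ℤ) : Prop :=
  Feasible n p T1 T2 σ ∧ Dmax n p σ ≤ k

/-- Total weighted completion time `Σ_j w_j · C_j(σ)`. -/
def WObj (p w : Fin n → ℤ) (σ : Fin n → ℤ) : ℤ :=
  ∑ j, w j * (σ j + p j)

/-- The objective `Z(σ) = μ·Δ_max(σ) + Σ_j w_j·C_j(σ)`. -/
def Zval (p w : Fin n → ℤ) (μ : ℚ) (σ : Fin n → ℤ) : ℚ :=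
  μ * (Dmax n p σ : ℚ) + (WObj n p w σ : ℚ)

/-- Optimal: admissible and minimizing `Z` over all admissible schedules. -/
def Optimal (p w : Fin n → ℤ) (T1 T2 k : ℤ) (μ : ℚ) (σ : Fin n → ℤ) : Prop :=
  Admissible n p T1 T2 k σ ∧
  ∀ τ, Admissible n p T1 T2 k τ → Zval n p w μ σ ≤ Zval n p w μ τ

/-- `t ≥ 0` is an earlier-schedule idle time unit of `σ`: no job is processed
during `[t, t+1]` and some earlier-schedule job starts at or after `t+1`. -/
def IdleUnit (p : Fin n → ℤ) (T1 : ℤ) (σ : Fin n → ℤ) (t : ℤ) : Prop :=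
  0 ≤ t ∧ (∀ m, ¬(σ m ≤ t ∧ t + 1 ≤ σ m + p m)) ∧
  ∃ j, σ j + p j ≤ T1 ∧ t + 1 ≤ σ j

-- helper lemmas
lemma corig_mono' {n : ℕ} (p : Fin n → ℤ) (hp : ∀ j, 0 < p j) {i j : Fin n} (h : i ≤ j) :
    Corig n p i ≤ Corig n p j := by
  apply Finset.sum_le_sum_of_subset_of_nonneg
  · intro m hm
    simp only [Finset.mem_filter, Finset.mem_univ, true_and] at hm ⊢
    exact hm.trans h
  · intro m _ _; exact (hp m).le

lemma corig_add' {n : ℕ} (p : Fin n → ℤ) (hp : ∀ j, 0 < p j) {i j : Fin n} (h : i < j) :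
    Corig n p i + p j ≤ Corig n p j := by
  have hji : j ∉ Finset.univ.filter (fun m => m ≤ i) := by
    simp [not_le.mpr h]
  have heq : Corig n p i + p j = ∑ m ∈ insert j (Finset.univ.filter (fun m => m ≤ i)), p m := by
    rw [Finset.sum_insert hji, Corig]; ring
  rw [heq, Corig]
  apply Finset.sum_le_sum_of_subset_of_nonneg
  · intro m hm
    simp only [Finset.mem_insert, Finset.mem_filter, Finset.mem_univ, true_and] at hm ⊢
    rcases hm with rfl | hm
    · exact le_refl m
    · exact hm.trans h.le
  · intro m _ _; exact (hp m).le

lemma dev_le_dmax' {n : ℕ} (p σ : Fin n → ℤ) (m : Fin n) : Dev n p σ m ≤ Dmax n p σ :=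
  (Finset.le_fold_max _).mpr (Or.inr ⟨m, Finset.mem_univ m, le_rfl⟩)

lemma dmax_nonneg' {n : ℕ} (p σ : Fin n → ℤ) : 0 ≤ Dmax n p σ :=
  (Finset.le_fold_max _).mpr (Or.inl le_rfl)

lemma dmax_le' {n : ℕ} (p σ : Fin n → ℤ) {c : ℤ} (hc : 0 ≤ c)
    (h : ∀ m, Dev n p σ m ≤ c) : Dmax n p σ ≤ c :=
  (Finset.fold_max_le _).mpr ⟨hc, fun m _ => h m⟩

lemma exists_optimal' {n : ℕ} (p w : Fin n → ℤ) (T1 T2 k : ℤ) (μ : ℚ)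
    (hp : ∀ j, 0 < p j)
    (hadm : ∃ σ, Admissible n p T1 T2 k σ) :
    ∃ σ, Optimal n p w T1 T2 k μ σ := by
  classical
  obtain ⟨σ0, hσ0⟩ := hadm
  set A := (Fintype.piFinset (fun j => Finset.Icc (0:ℤ) (Corig n p j + k))).filter
    (fun σ => Admissible n p T1 T2 k σ) with hA
  have hmem : ∀ σ, Admissible n p T1 T2 k σ → σ ∈ A := by
    intro σ hσ
    refine Finset.mem_filter.mpr ⟨Fintype.mem_piFinset.mpr ?_, hσ⟩
    intro j
    rw [Finset.mem_Icc]
    refine ⟨hσ.1.1 j, ?_⟩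
    have h1 : Dev n p σ j ≤ k := (dev_le_dmax' p σ j).trans hσ.2
    rw [Dev] at h1
    have h2 : σ j + p j - Corig n p j ≤ |σ j + p j - Corig n p j| := le_abs_self _
    have := hp j
    linarith
  obtain ⟨σ1, hσ1A, hmin⟩ := Finset.exists_min_image A (Zval n p w μ) ⟨σ0, hmem σ0 hσ0⟩
  exact ⟨σ1, (Finset.mem_filter.mp hσ1A).2, fun τ hτ => hmin τ (hmem τ hτ)⟩

lemma exchange' {n : ℕ} (p w : Fin n → ℤ) (T1 T2 k : ℤ) (μ : ℚ)
    (hp : ∀ j, 0 < p j) (hw : ∀ j, 0 < w j)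
    (hwspt : ∀ i j : Fin n, i ≤ j → p i * w j ≤ p j * w i) (hμ : 0 ≤ μ)
    (σ : Fin n → ℤ) (hopt : Optimal n p w T1 T2 k μ σ)
    (i j : Fin n) (hij : i < j) (hji : σ j < σ i)
    (hpart : (σ i + p i ≤ T1 ∧ σ j + p j ≤ T1) ∨ (T2 ≤ σ i ∧ T2 ≤ σ j))
    (hbetween : ∀ m, m ≠ i → m ≠ j → ¬(σ j < σ m ∧ σ m < σ i)) :
    ∃ τ, Optimal n p w T1 T2 k μ τ ∧
      (Finset.univ.filter (fun q : Fin n × Fin n => q.1 < q.2 ∧ τ q.2 < τ q.1)) ⊂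
      (Finset.univ.filter (fun q : Fin n × Fin n => q.1 < q.2 ∧ σ q.2 < σ q.1)) := by
  classical
  obtain ⟨⟨⟨h0, hdisj, hp3⟩, hDk⟩, hZmin⟩ := hopt
  have hne : i ≠ j := ne_of_lt hij
  have hgap : σ j + p j ≤ σ i := by
    rcases hdisj i j hne with h | h
    · exfalso; have := hp i; linarith
    · exact h
  have hdist : ∀ a b : Fin n, a ≠ b → σ a ≠ σ b := by
    intro a b hab hc
    rcases hdisj a b hab with h | h
    · have := hp a; omega
    · have := hp b; omega
  have hout : ∀ m, m ≠ i → m ≠ j → σ m + p m ≤ σ j ∨ σ i + p i ≤ σ m := by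
    intro m hmi hmj
    rcases hdisj m j hmj with h | h
    · exact Or.inl h
    · have h1 : σ j < σ m := by have := hp j; linarith
      have h2 : ¬ σ m < σ i := fun hc => hbetween m hmi hmj ⟨h1, hc⟩
      have h3 : σ i < σ m := lt_of_le_of_ne (not_lt.mp h2) (Ne.symm (hdist m i hmi))
      rcases hdisj m i hmi with h4 | h4
      · exfalso; have := hp m; linarith
      · exact Or.inr h4
  set τ : Fin n → ℤ := fun m => if m = i then σ j else if m = j then σ j + p i else σ m
    with hτdef
  have hτi : τ i = σ j := by simp [hτdef]
  have hτj : τ j = σ j + p i := by simp [hτdef, hne.symm]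
  have hτm : ∀ m, m ≠ i → m ≠ j → τ m = σ m := by
    intro m h1 h2; simp [hτdef, h1, h2]
  -- Feasibility
  have hfeasτ : Feasible n p T1 T2 τ := by
    refine ⟨?_, ?_, ?_⟩
    · intro m
      by_cases hmi : m = i
      · rw [hmi, hτi]; exact h0 j
      · by_cases hmj : m = j
        · rw [hmj, hτj]; have := hp i; have := h0 j; linarith
        · rw [hτm m hmi hmj]; exact h0 m
    · intro a b hab
      by_cases hai : a = i
      · by_cases hbj : b = j
        · left; rw [hai, hbj, hτi, hτj]
        · have hbi : b ≠ i := fun hc => hab (hai.trans hc.symm)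
          rcases hout b hbi hbj with h | h
          · right; rw [hai, hτi, hτm b hbi hbj]; exact h
          · left; rw [hai, hτi, hτm b hbi hbj]; have := hp j; linarith
      · by_cases haj : a = j
        · by_cases hbi : b = i
          · right; rw [haj, hbi, hτi, hτj]
          · have hbj : b ≠ j := fun hc => hab (haj.trans hc.symm)
            rcases hout b hbi hbj with h | h
            · right; rw [haj, hτj, hτm b hbi hbj]; have := hp i; linarith
            · left; rw [haj, hτj, hτm b hbi hbj]; linarith
        · by_cases hbi : b = i
          · rcases hout a hai haj with h | h
            · left; rw [hbi, hτi, hτm a hai haj]; exact h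
            · right; rw [hbi, hτi, hτm a hai haj]; linarith
          · by_cases hbj : b = j
            · rcases hout a hai haj with h | h
              · left; rw [hbj, hτj, hτm a hai haj]; have := hp i; linarith
              · right; rw [hbj, hτj, hτm a hai haj]; linarith
            · rw [hτm a hai haj, hτm b hbi hbj]; exact hdisj a b hab
    · intro m
      by_cases hmi : m = i
      · rcases hpart with ⟨h1, h2⟩ | ⟨h1, h2⟩
        · left; rw [hmi, hτi]; have := hp j; linarith
        · right; rw [hmi, hτi]; exact h2
      · by_cases hmj : m = j
        · rcases hpart with ⟨h1, h2⟩ | ⟨h1, h2⟩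
          · left; rw [hmj, hτj]; linarith
          · right; rw [hmj, hτj]; have := hp i; linarith
        · rw [hτm m hmi hmj]; exact hp3 m
  -- deviation bounds
  have hCij : Corig n p i + p j ≤ Corig n p j := corig_add' p hp hij
  have hDi : |σ i + p i - Corig n p i| ≤ Dmax n p σ := dev_le_dmax' p σ i
  have hDj : |σ j + p j - Corig n p j| ≤ Dmax n p σ := dev_le_dmax' p σ j
  have hDi1 : σ i + p i - Corig n p i ≤ Dmax n p σ := le_trans (le_abs_self _) hDi
  have hDj2 : -(σ j + p j - Corig n p j) ≤ Dmax n p σ := le_trans (neg_le_abs _) hDj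
  have hdevτ : ∀ m, Dev n p τ m ≤ Dmax n p σ := by
    intro m
    by_cases hmi : m = i
    · rw [hmi, Dev, hτi, abs_le]
      constructor
      · have := hp i; have := hp j; linarith
      · linarith
    · by_cases hmj : m = j
      · rw [hmj, Dev, hτj, abs_le]
        constructor
        · have := hp i; linarith
        · have := hp j; linarith
      · rw [Dev, hτm m hmi hmj]; exact dev_le_dmax' p σ m
  have hDτ : Dmax n p τ ≤ Dmax n p σ := dmax_le' p τ (dmax_nonneg' p σ) hdevτ
  -- objective
  have hW : WObj n p w σ - WObj n p w τ = w i * (σ i - σ j) - w j * p i := by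
    have hzero : ∀ m ∈ Finset.univ, m ∉ ({i, j} : Finset (Fin n)) →
        w m * (σ m + p m) - w m * (τ m + p m) = 0 := by
      intro m _ hm
      simp only [Finset.mem_insert, Finset.mem_singleton, not_or] at hm
      rw [hτm m hm.1 hm.2]; ring
    have hsum : ∑ m ∈ ({i, j} : Finset (Fin n)), (w m * (σ m + p m) - w m * (τ m + p m)) =
        ∑ m, (w m * (σ m + p m) - w m * (τ m + p m)) :=
      Finset.sum_subset (Finset.subset_univ _) hzero
    have hpair : ∑ m ∈ ({i, j} : Finset (Fin n)), (w m * (σ m + p m) - w m * (τ m + p m)) =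
        (w i * (σ i + p i) - w i * (τ i + p i)) + (w j * (σ j + p j) - w j * (τ j + p j)) :=
      Finset.sum_pair hne
    rw [WObj, WObj, ← Finset.sum_sub_distrib, ← hsum, hpair, hτi, hτj]; ring
  have hWs : WObj n p w τ ≤ WObj n p w σ := by
    have h1 : w i * p j ≤ w i * (σ i - σ j) :=
      mul_le_mul_of_nonneg_left (by linarith) (hw i).le
    have h2 := hwspt i j hij.le
    have h3 : w j * p i = p i * w j := mul_comm _ _
    have h4 : w i * p j = p j * w i := mul_comm _ _
    linarith
  have hadmτ : Admissible n p T1 T2 k τ := ⟨hfeasτ, hDτ.trans hDk⟩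
  have hZ : Zval n p w μ τ ≤ Zval n p w μ σ := by
    rw [Zval, Zval]
    have c1 : (Dmax n p τ : ℚ) ≤ (Dmax n p σ : ℚ) := by exact_mod_cast hDτ
    have c2 : (WObj n p w τ : ℚ) ≤ (WObj n p w σ : ℚ) := by exact_mod_cast hWs
    have := mul_le_mul_of_nonneg_left c1 hμ
    linarith
  refine ⟨τ, ⟨hadmτ, fun ρ hρ => hZ.trans (hZmin ρ hρ)⟩, ?_⟩
  -- strict subset of inversion sets
  have hcomp : ∀ m, m ≠ i → m ≠ j →
      (σ m < σ j ∧ σ m < σ j + p i ∧ σ m < σ i) ∨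
      (σ j < σ m ∧ σ j + p i < σ m ∧ σ i < σ m) := by
    intro m hmi hmj
    rcases hout m hmi hmj with h | h
    · left; have := hp m; have := hp i; refine ⟨by linarith, by linarith, by linarith⟩
    · right; have := hp i; have := hp j; refine ⟨by linarith, by linarith, by linarith⟩
  have hsub : (Finset.univ.filter (fun q : Fin n × Fin n => q.1 < q.2 ∧ τ q.2 < τ q.1)) ⊆
      (Finset.univ.filter (fun q : Fin n × Fin n => q.1 < q.2 ∧ σ q.2 < σ q.1)) := by
    intro q hq
    simp only [Finset.mem_filter, Finset.mem_univ, true_and] at hq ⊢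
    obtain ⟨hq1, hq2⟩ := hq
    refine ⟨hq1, ?_⟩
    by_cases hai : q.1 = i
    · by_cases hbj : q.2 = j
      · exfalso; rw [hai, hbj, hτi, hτj] at hq2; have := hp i; linarith
      · have hbi : q.2 ≠ i := by intro hc; rw [hai, hc] at hq1; exact lt_irrefl _ hq1
        rw [hai, hτi, hτm q.2 hbi hbj] at hq2
        rw [hai]; linarith
    · by_cases haj : q.1 = j
      · by_cases hbi : q.2 = i
        · exfalso; rw [haj, hbi] at hq1; exact absurd hq1 (not_lt.mpr hij.le)
        · have hbj : q.2 ≠ j := by intro hc; rw [haj, hc] at hq1; exact lt_irrefl _ hq1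
          rw [haj, hτj, hτm q.2 hbi hbj] at hq2
          rcases hcomp q.2 hbi hbj with ⟨h1, h2, h3⟩ | ⟨h1, h2, h3⟩
          · rw [haj]; exact h1
          · exfalso; linarith
      · by_cases hbi : q.2 = i
        · rw [hbi, hτi, hτm q.1 hai haj] at hq2
          rcases hcomp q.1 hai haj with ⟨h1, h2, h3⟩ | ⟨h1, h2, h3⟩
          · exfalso; linarith
          · rw [hbi]; exact h3
        · by_cases hbj : q.2 = j
          · rw [hbj, hτj, hτm q.1 hai haj] at hq2
            rcases hcomp q.1 hai haj with ⟨h1, h2, h3⟩ | ⟨h1, h2, h3⟩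
            · exfalso; linarith
            · rw [hbj]; exact h1
          · rw [hτm q.1 hai haj, hτm q.2 hbi hbj] at hq2; exact hq2
  refine (Finset.ssubset_iff_of_subset hsub).mpr ⟨(i, j), ?_, ?_⟩
  · simp only [Finset.mem_filter, Finset.mem_univ, true_and]
    exact ⟨hij, hji⟩
  · simp only [Finset.mem_filter, Finset.mem_univ, true_and, not_and]
    intro _
    rw [hτi, hτj]
    have := hp i; linarith

/-- there exists an optimal schedule in which both the
earlier-schedule jobs and the later-schedule jobs appear in the same (WSPT)
order as in `π*`. -/
theorem stmt_0 (n : ℕ) (p w : Fin n → ℤ) (T1 T2 k : ℤ) (μ : ℚ)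
    (hn : 0 < n) (hp : ∀ j, 0 < p j) (hw : ∀ j, 0 < w j)
    (hwspt : ∀ i j : Fin n, i ≤ j → p i * w j ≤ p j * w i)
    (hT1 : 0 ≤ T1) (hT12 : T1 < T2) (hk : 0 ≤ k) (hμ : 0 ≤ μ)
    (hadm : ∃ σ, Admissible n p T1 T2 k σ) :
    ∃ σ, Optimal n p w T1 T2 k μ σ ∧
      (∀ i j : Fin n, i < j → σ i + p i ≤ T1 → σ j + p j ≤ T1 → σ i < σ j) ∧
      (∀ i j : Fin n, i < j → T2 ≤ σ i → T2 ≤ σ j → σ i < σ j) := by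
  classical
  obtain ⟨σ1, hσ1⟩ := exists_optimal' p w T1 T2 k μ hp hadm
  have hex : ∃ m : ℕ, ∃ σ, Optimal n p w T1 T2 k μ σ ∧
      (Finset.univ.filter (fun q : Fin n × Fin n => q.1 < q.2 ∧ σ q.2 < σ q.1)).card = m :=
    ⟨_, σ1, hσ1, rfl⟩
  obtain ⟨σ, hopt, hcard⟩ := Nat.find_spec hex
  have hdist : ∀ a b : Fin n, a ≠ b → σ a ≠ σ b := by
    intro a b hab hc
    rcases hopt.1.1.2.1 a b hab with h | h
    · have := hp a; omega
    · have := hp b; omega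
  have key : ∀ i j : Fin n, i < j → σ j < σ i →
      ¬((σ i + p i ≤ T1 ∧ σ j + p j ≤ T1) ∨ (T2 ≤ σ i ∧ T2 ≤ σ j)) := by
    intro i0 j0 hij0 hji0 hpart0
    set BP := Finset.univ.filter (fun q : Fin n × Fin n => q.1 < q.2 ∧ σ q.2 < σ q.1 ∧
      ((σ q.1 + p q.1 ≤ T1 ∧ σ q.2 + p q.2 ≤ T1) ∨ (T2 ≤ σ q.1 ∧ T2 ≤ σ q.2))) with hBP
    have hBPne : BP.Nonempty := by
      refine ⟨(i0, j0), Finset.mem_filter.mpr ⟨Finset.mem_univ _, ?_⟩⟩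
      exact ⟨hij0, hji0, hpart0⟩
    obtain ⟨q, hqBP, hqmin⟩ := Finset.exists_min_image BP (fun q => σ q.1 - σ q.2) hBPne
    rw [hBP, Finset.mem_filter] at hqBP
    obtain ⟨-, hij, hji, hpart⟩ := hqBP
    have hp3 := hopt.1.1.2.2
    have hbetween : ∀ m, m ≠ q.1 → m ≠ q.2 → ¬(σ q.2 < σ m ∧ σ m < σ q.1) := by
      rintro m hmi hmj ⟨h1, h2⟩
      rcases hpart with ⟨hi1, hj1⟩ | ⟨hi2, hj2⟩
      · have hm1 : σ m + p m ≤ T1 := by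
          rcases hp3 m with h | h
          · exact h
          · exfalso; have := hp q.1; linarith
        rcases lt_or_gt_of_ne hmi with hlt | hgt
        · have hmem : (m, q.2) ∈ BP := by
            refine Finset.mem_filter.mpr ⟨Finset.mem_univ _, ?_⟩
            exact ⟨lt_trans hlt hij, h1, Or.inl ⟨hm1, hj1⟩⟩
          have := hqmin _ hmem
          simp only at this
          linarith
        · have hmem : (q.1, m) ∈ BP := by
            refine Finset.mem_filter.mpr ⟨Finset.mem_univ _, ?_⟩
            exact ⟨hgt, h2, Or.inl ⟨hi1, hm1⟩⟩
          have := hqmin _ hmem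
          simp only at this
          linarith
      · have hm2 : T2 ≤ σ m := by linarith
        rcases lt_or_gt_of_ne hmi with hlt | hgt
        · have hmem : (m, q.2) ∈ BP := by
            refine Finset.mem_filter.mpr ⟨Finset.mem_univ _, ?_⟩
            exact ⟨lt_trans hlt hij, h1, Or.inr ⟨hm2, hj2⟩⟩
          have := hqmin _ hmem
          simp only at this
          linarith
        · have hmem : (q.1, m) ∈ BP := by
            refine Finset.mem_filter.mpr ⟨Finset.mem_univ _, ?_⟩
            exact ⟨hgt, h2, Or.inr ⟨hi2, hm2⟩⟩
          have := hqmin _ hmem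
          simp only at this
          linarith
    obtain ⟨τ, hoptτ, hss⟩ := exchange' p w T1 T2 k μ hp hw hwspt hμ σ hopt
      q.1 q.2 hij hji hpart hbetween
    have h1 : Nat.find hex ≤
        (Finset.univ.filter (fun q : Fin n × Fin n => q.1 < q.2 ∧ τ q.2 < τ q.1)).card :=
      Nat.find_min' hex ⟨τ, hoptτ, rfl⟩
    have h2 := Finset.card_lt_card hss
    omega
  refine ⟨σ, hopt, ?_, ?_⟩
  · intro i j hij h1 h2
    rcases lt_or_gt_of_ne (hdist i j (ne_of_lt hij)) with h | h
    · exact h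
    · exact absurd (Or.inl ⟨h1, h2⟩) (key i j hij h)
  · intro i j hij h1 h2
    rcases lt_or_gt_of_ne (hdist i j (ne_of_lt hij)) with h | h
    · exact h
    · exact absurd (Or.inr ⟨h1, h2⟩) (key i j hij h)
end

section
/- There exists an optimal schedule σ* in which the earlier-schedule jobs appear in increasing index order of start times, the later-schedule jobs appear in increasing index order of start times, and the set of earlier-schedule idle time units of σ* is a (possibly empty) set of consecutive integers; that is, the machine idles for at most one period of time in the earlier schedule. -/
open Finset

variable (n : ℕ)

namespace Stmt2

variable {n : ℕ}

lemma dev_le_dmax (p σ : Fin n → ℤ) (j : Fin n) : Dev n p σ j ≤ Dmax n p σ :=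
  (Finset.le_fold_max _).mpr (Or.inr ⟨j, mem_univ j, le_rfl⟩)

lemma dev_abs_le_dmax (p σ : Fin n → ℤ) (j : Fin n) :
    |σ j + p j - Corig n p j| ≤ Dmax n p σ := dev_le_dmax p σ j

lemma dmax_nonneg (p σ : Fin n → ℤ) : 0 ≤ Dmax n p σ :=
  (Finset.le_fold_max _).mpr (Or.inl le_rfl)

lemma dmax_le {p σ : Fin n → ℤ} {c : ℤ} (hc : 0 ≤ c) (h : ∀ j, Dev n p σ j ≤ c) :
    Dmax n p σ ≤ c := (Finset.fold_max_le c).mpr ⟨hc, fun j _ => h j⟩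

lemma corig_le_sum (p : Fin n → ℤ) (hp : ∀ j, 0 < p j) (j : Fin n) :
    Corig n p j ≤ ∑ i, p i :=
  Finset.sum_le_sum_of_subset_of_nonneg (filter_subset _ _) (fun i _ _ => (hp i).le)

lemma add_corig_le (p : Fin n → ℤ) (hp : ∀ j, 0 < p j) {i j : Fin n} (hij : i < j) :
    Corig n p i + p j ≤ Corig n p j := by
  have hji : j ∉ univ.filter (fun m => m ≤ i) := by
    simp only [mem_filter, mem_univ, true_and]
    exact fun h => absurd hij (not_lt.mpr h)
  have hsub : insert j (univ.filter (fun m => m ≤ i)) ⊆ univ.filter (fun m => m ≤ j) := by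
    intro x hx
    simp only [mem_insert, mem_filter, mem_univ, true_and] at *
    rcases hx with rfl | h
    · exact le_rfl
    · exact le_trans h hij.le
  have h1 : p j + Corig n p i = ∑ m ∈ insert j (univ.filter (fun m => m ≤ i)), p m :=
    (Finset.sum_insert hji).symm
  have h2 : ∑ m ∈ insert j (univ.filter (fun m => m ≤ i)), p m ≤ Corig n p j :=
    Finset.sum_le_sum_of_subset_of_nonneg hsub (fun m _ _ => (hp m).le)
  linarith

lemma corig_diff (p : Fin n → ℤ) {m j : Fin n} (h : m < j) :
    Corig n p j = Corig n p m + ∑ i ∈ univ.filter (fun i => m < i ∧ i ≤ j), p i := by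
  unfold Corig
  rw [← Finset.sum_filter_add_sum_filter_not (univ.filter (fun i => i ≤ j)) (fun i => i ≤ m) p]
  congr 1
  · apply Finset.sum_congr _ (fun _ _ => rfl)
    rw [Finset.filter_filter]
    apply Finset.filter_congr
    intro x _
    exact ⟨fun h2 => h2.2, fun h2 => ⟨h2.trans h.le, h2⟩⟩
  · apply Finset.sum_congr _ (fun _ _ => rfl)
    rw [Finset.filter_filter]
    apply Finset.filter_congr
    intro x _
    exact ⟨fun h2 => ⟨not_le.mp h2.2, h2.1⟩, fun h2 => ⟨h2.2, not_le.mpr h2.1⟩⟩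

lemma wobj_diff (p w : Fin n → ℤ) (σ τ : Fin n → ℤ) (s : Finset (Fin n))
    (h : ∀ m, m ∉ s → τ m = σ m) :
    WObj n p w τ = WObj n p w σ + ∑ m ∈ s, w m * (τ m - σ m) := by
  unfold WObj
  have h1 : ∑ m ∈ s, w m * (τ m - σ m) = ∑ m : Fin n, w m * (τ m - σ m) := by
    apply Finset.sum_subset (subset_univ s)
    intro x _ hx
    rw [h x hx]; ring
  rw [h1, ← Finset.sum_add_distrib]
  apply Finset.sum_congr rfl
  intro x _; ring

lemma zval_le_zval (p w : Fin n → ℤ) {μ : ℚ} (hμ : 0 ≤ μ) {σ τ : Fin n → ℤ}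
    (h1 : Dmax n p τ ≤ Dmax n p σ) (h2 : WObj n p w τ ≤ WObj n p w σ) :
    Zval n p w μ τ ≤ Zval n p w μ σ := by
  unfold Zval
  have c1 : (Dmax n p τ : ℚ) ≤ (Dmax n p σ : ℚ) := Int.cast_le.mpr h1
  have c2 : (WObj n p w τ : ℚ) ≤ (WObj n p w σ : ℚ) := Int.cast_le.mpr h2
  nlinarith [mul_le_mul_of_nonneg_left c1 hμ]

lemma zval_lt_zval (p w : Fin n → ℤ) {μ : ℚ} (hμ : 0 ≤ μ) {σ τ : Fin n → ℤ}
    (h1 : Dmax n p τ ≤ Dmax n p σ) (h2 : WObj n p w τ < WObj n p w σ) :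
    Zval n p w μ τ < Zval n p w μ σ := by
  unfold Zval
  have c1 : (Dmax n p τ : ℚ) ≤ (Dmax n p σ : ℚ) := Int.cast_le.mpr h1
  have c2 : (WObj n p w τ : ℚ) < (WObj n p w σ : ℚ) := Int.cast_lt.mpr h2
  nlinarith [mul_le_mul_of_nonneg_left c1 hμ]


def InvCount (p : Fin n → ℤ) (T1 T2 : ℤ) (σ : Fin n → ℤ) : ℕ :=
  ((univ ×ˢ univ).filter (fun q : Fin n × Fin n => q.1 < q.2 ∧ σ q.2 < σ q.1 ∧
    ((σ q.1 + p q.1 ≤ T1 ∧ σ q.2 + p q.2 ≤ T1) ∨ (T2 ≤ σ q.1 ∧ T2 ≤ σ q.2)))).card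

lemma exists_opt (p w : Fin n → ℤ) (T1 T2 k : ℤ) (μ : ℚ) (hp : ∀ j, 0 < p j)
    (hadm : ∃ σ, Admissible n p T1 T2 k σ) :
    ∃ σ, Admissible n p T1 T2 k σ ∧
      (∀ τ, Admissible n p T1 T2 k τ → Zval n p w μ σ ≤ Zval n p w μ τ) ∧
      (∀ τ, Admissible n p T1 T2 k τ → Zval n p w μ τ = Zval n p w μ σ →
        InvCount p T1 T2 σ ≤ InvCount p T1 T2 τ) := by
  classical
  set F := Fintype.piFinset (fun _ : Fin n => Finset.Icc (0:ℤ) (k + ∑ i, p i)) with hF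
  have hmemF : ∀ τ, Admissible n p T1 T2 k τ → τ ∈ F := by
    intro τ ⟨⟨h0, _, _⟩, hDk⟩
    rw [hF, Fintype.mem_piFinset]
    intro j
    rw [Finset.mem_Icc]
    refine ⟨h0 j, ?_⟩
    have h1 : |τ j + p j - Corig n p j| ≤ k := le_trans (dev_le_dmax p τ j) hDk
    have h2 := corig_le_sum p hp j
    have h3 := hp j
    have h4 := abs_le.mp h1
    linarith [h4.2]
  obtain ⟨σ0, hσ0⟩ := hadm
  set A := F.filter (fun τ => Admissible n p T1 T2 k τ) with hA
  have hAne : A.Nonempty := ⟨σ0, by rw [hA, mem_filter]; exact ⟨hmemF _ hσ0, hσ0⟩⟩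
  obtain ⟨σ1, hσ1A, hσ1min⟩ := Finset.exists_min_image A (Zval n p w μ) hAne
  set A2 := A.filter (fun τ => Zval n p w μ τ = Zval n p w μ σ1) with hA2
  have hA2ne : A2.Nonempty := ⟨σ1, by rw [hA2, mem_filter]; exact ⟨hσ1A, rfl⟩⟩
  obtain ⟨σ, hσA2, hσmin⟩ := Finset.exists_min_image A2 (InvCount p T1 T2) hA2ne
  rw [hA2, mem_filter] at hσA2
  obtain ⟨hσA, hσZ⟩ := hσA2
  rw [hA, mem_filter] at hσA
  refine ⟨σ, hσA.2, ?_, ?_⟩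
  · intro τ hτ
    rw [hσZ]
    exact hσ1min τ (by rw [hA, mem_filter]; exact ⟨hmemF _ hτ, hτ⟩)
  · intro τ hτ hZeq
    apply hσmin
    rw [hA2, mem_filter]
    constructor
    · rw [hA, mem_filter]; exact ⟨hmemF _ hτ, hτ⟩
    · rw [hZeq, hσZ]

lemma no_inversion (p w : Fin n → ℤ) (T1 T2 k : ℤ) (μ : ℚ)
    (hp : ∀ j, 0 < p j) (hw : ∀ j, 0 < w j)
    (hwspt : ∀ i j : Fin n, i ≤ j → p i * w j ≤ p j * w i)
    (hT12 : T1 < T2) (hμ : 0 ≤ μ) {σ : Fin n → ℤ}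
    (hadm : Admissible n p T1 T2 k σ)
    (hopt : ∀ τ, Admissible n p T1 T2 k τ → Zval n p w μ σ ≤ Zval n p w μ τ)
    (hinv : ∀ τ, Admissible n p T1 T2 k τ → Zval n p w μ τ = Zval n p w μ σ →
      InvCount p T1 T2 σ ≤ InvCount p T1 T2 τ) :
    ∀ i j : Fin n, i < j →
      ((σ i + p i ≤ T1 ∧ σ j + p j ≤ T1) ∨ (T2 ≤ σ i ∧ T2 ≤ σ j)) → σ i < σ j := by
  obtain ⟨⟨hnn, hdisj, hside⟩, hDk⟩ := hadm
  suffices hS : ∀ i j : Fin n, ¬ (i < j ∧ σ j < σ i ∧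
      ((σ i + p i ≤ T1 ∧ σ j + p j ≤ T1) ∨ (T2 ≤ σ i ∧ T2 ≤ σ j))) by
    intro i j hij hss
    rcases hdisj i j hij.ne with h | h
    · linarith [hp i]
    · exfalso
      exact hS i j ⟨hij, by linarith [hp j], hss⟩
  by_contra hcon
  push_neg at hcon
  obtain ⟨i0, j0, hbad⟩ := hcon
  set Pred := fun (ρ : Fin n → ℤ) (q : Fin n × Fin n) => q.1 < q.2 ∧ ρ q.2 < ρ q.1 ∧
    ((ρ q.1 + p q.1 ≤ T1 ∧ ρ q.2 + p q.2 ≤ T1) ∨ (T2 ≤ ρ q.1 ∧ T2 ≤ ρ q.2)) with hPred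
  have hmemS : ∀ (ρ : Fin n → ℤ) (q : Fin n × Fin n),
      q ∈ (univ ×ˢ univ).filter (Pred ρ) ↔ Pred ρ q := by
    intro ρ q
    simp [Finset.mem_filter, Finset.mem_product]
  have hSne : ((univ ×ˢ univ).filter (Pred σ)).Nonempty :=
    ⟨(i0, j0), (hmemS σ (i0, j0)).mpr hbad⟩
  obtain ⟨q0, hmem0, hmin0⟩ :=
    Finset.exists_min_image _ (fun q => (σ q.1 - σ q.2).toNat) hSne
  obtain ⟨i, j⟩ := q0
  rw [hmemS] at hmem0
  have hij : i < j := hmem0.1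
  have hji : σ j < σ i := hmem0.2.1
  have hss : (σ i + p i ≤ T1 ∧ σ j + p j ≤ T1) ∨ (T2 ≤ σ i ∧ T2 ≤ σ j) := hmem0.2.2
  have hmin : ∀ a b : Fin n, (a < b ∧ σ b < σ a ∧
      ((σ a + p a ≤ T1 ∧ σ b + p b ≤ T1) ∨ (T2 ≤ σ a ∧ T2 ≤ σ b))) →
      (σ i - σ j).toNat ≤ (σ a - σ b).toNat := by
    intro a b h
    exact hmin0 (a, b) ((hmemS σ (a, b)).mpr h)
  have hb : σ j + p j ≤ σ i := by
    rcases hdisj i j hij.ne with h | h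
    · exfalso; linarith [hp i]
    · exact h
  have hsep : ∀ x, x ≠ i → x ≠ j → σ x + p x ≤ σ j ∨ σ i + p i ≤ σ x := by
    intro x hxi hxj
    rcases hdisj x j hxj with h1 | h1
    · exact Or.inl h1
    rcases hdisj i x (fun h => hxi h.symm) with h2 | h2
    · exact Or.inr h2
    exfalso
    rcases lt_trichotomy x i with hxi' | hxi' | hxi'
    · have hm1 : (σ i - σ j).toNat ≤ (σ x - σ j).toNat := by
        apply hmin x j
        refine ⟨lt_trans hxi' hij, by linarith [hp j], ?_⟩
        rcases hss with ⟨hEi, hEj⟩ | ⟨hLi, hLj⟩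
        · left; exact ⟨by linarith [hp i], hEj⟩
        · right; exact ⟨by linarith [hp j], hLj⟩
      have e1 : (0:ℤ) ≤ σ i - σ j := by linarith
      have e2 : (0:ℤ) ≤ σ x - σ j := by linarith [hp j]
      have e3 : σ x - σ j < σ i - σ j := by linarith [hp x]
      omega
    · exact hxi hxi'
    · have hm1 : (σ i - σ j).toNat ≤ (σ i - σ x).toNat := by
        apply hmin i x
        refine ⟨hxi', by linarith [hp x], ?_⟩
        rcases hss with ⟨hEi, hEj⟩ | ⟨hLi, hLj⟩
        · left; exact ⟨hEi, by linarith [hp i]⟩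
        · right; exact ⟨hLi, by linarith [hp j]⟩
      have e1 : (0:ℤ) ≤ σ i - σ j := by linarith
      have e2 : (0:ℤ) ≤ σ i - σ x := by linarith [hp x]
      have e3 : σ i - σ x < σ i - σ j := by linarith [hp j]
      omega
  set τ := Function.update (Function.update σ i (σ j)) j (σ j + p i) with hτdef
  have hτj : τ j = σ j + p i := by rw [hτdef, Function.update_self]
  have hτi : τ i = σ j := by
    rw [hτdef, Function.update_of_ne hij.ne, Function.update_self]
  have hτx : ∀ x, x ≠ i → x ≠ j → τ x = σ x := by
    intro x hxi hxj
    rw [hτdef, Function.update_of_ne hxj, Function.update_of_ne hxi]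
  have hfeas' : Feasible n p T1 T2 τ := by
    refine ⟨?_, ?_, ?_⟩
    · intro x
      by_cases hxi : x = i
      · rw [hxi, hτi]; exact hnn j
      by_cases hxj : x = j
      · rw [hxj, hτj]; linarith [hnn j, hp i]
      · rw [hτx x hxi hxj]; exact hnn x
    · intro x y hxy
      by_cases hxi : x = i
      · by_cases hyj : y = j
        · rw [hxi, hyj, hτi, hτj]; left; exact le_rfl
        · have hyi : y ≠ i := fun h => hxy (hxi.trans h.symm)
          rw [hxi, hτi, hτx y hyi hyj]
          rcases hsep y hyi hyj with h | h
          · right; exact h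
          · left; linarith
      by_cases hxj : x = j
      · by_cases hyi : y = i
        · rw [hxj, hyi, hτj, hτi]; right; exact le_rfl
        · have hyj : y ≠ j := fun h => hxy (hxj.trans h.symm)
          rw [hxj, hτj, hτx y hyi hyj]
          rcases hsep y hyi hyj with h | h
          · right; linarith [hp i]
          · left; linarith
      · by_cases hyi : y = i
        · rw [hyi, hτi, hτx x hxi hxj]
          rcases hsep x hxi hxj with h | h
          · left; exact h
          · right; linarith
        by_cases hyj : y = j
        · rw [hyj, hτj, hτx x hxi hxj]
          rcases hsep x hxi hxj with h | h
          · left; linarith [hp i]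
          · right; linarith
        · rw [hτx x hxi hxj, hτx y hyi hyj]
          exact hdisj x y hxy
    · intro x
      by_cases hxi : x = i
      · rw [hxi, hτi]
        rcases hss with ⟨hEi, hEj⟩ | ⟨hLi, hLj⟩
        · left; linarith [hp i, hp j]
        · right; exact hLj
      by_cases hxj : x = j
      · rw [hxj, hτj]
        rcases hss with ⟨hEi, hEj⟩ | ⟨hLi, hLj⟩
        · left; linarith
        · right; linarith [hp i]
      · rw [hτx x hxi hxj]; exact hside x
  have hYX : Corig n p i + p j ≤ Corig n p j := add_corig_le p hp hij
  have hdev : ∀ m, Dev n p τ m ≤ Dmax n p σ := by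
    intro m
    have hoi := abs_le.mp (dev_abs_le_dmax p σ i)
    have hoj := abs_le.mp (dev_abs_le_dmax p σ j)
    by_cases hmi : m = i
    · rw [hmi]
      unfold Dev
      rw [hτi, abs_le]
      constructor <;> linarith [hp i, hp j]
    by_cases hmj : m = j
    · rw [hmj]
      unfold Dev
      rw [hτj, abs_le]
      constructor <;> linarith [hp i, hp j]
    · unfold Dev
      rw [hτx m hmi hmj]
      exact dev_le_dmax p σ m
  have hDm' : Dmax n p τ ≤ Dmax n p σ := dmax_le (dmax_nonneg p σ) hdev
  have hadm' : Admissible n p T1 T2 k τ := ⟨hfeas', le_trans hDm' hDk⟩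
  have hW : WObj n p w τ ≤ WObj n p w σ := by
    have hupd : ∀ m, m ∉ ({i, j} : Finset (Fin n)) → τ m = σ m := by
      intro m hm
      simp only [Finset.mem_insert, Finset.mem_singleton] at hm
      push_neg at hm
      exact hτx m hm.1 hm.2
    rw [wobj_diff p w σ τ {i, j} hupd, Finset.sum_pair hij.ne]
    have key : w i * (τ i - σ i) + w j * (τ j - σ j) ≤ 0 := by
      rw [hτi, hτj]
      have h1 : w i * (σ j - σ i) ≤ w i * (-(p j)) :=
        mul_le_mul_of_nonneg_left (by linarith) (hw i).le
      have h2 : p i * w j ≤ p j * w i := hwspt i j hij.le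
      nlinarith
    linarith
  have hZeq : Zval n p w μ τ = Zval n p w μ σ :=
    le_antisymm (zval_le_zval p w hμ hDm' hW) (hopt τ hadm')
  have hIC := hinv τ hadm' hZeq
  have hsideiff : ∀ m, (τ m + p m ≤ T1 ↔ σ m + p m ≤ T1) ∧ (T2 ≤ τ m ↔ T2 ≤ σ m) := by
    intro m
    by_cases hmi : m = i
    · rw [hmi, hτi]
      rcases hss with ⟨hEi, hEj⟩ | ⟨hLi, hLj⟩
      · constructor
        · exact ⟨fun _ => hEi, fun _ => by linarith [hp i, hp j]⟩
        · constructor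
          · intro h; exfalso; linarith [hp j]
          · intro h; exfalso; linarith [hp i]
      · constructor
        · constructor
          · intro h; exfalso; linarith [hp i, hp j]
          · intro h; exfalso; linarith [hp i]
        · exact ⟨fun _ => hLi, fun _ => hLj⟩
    by_cases hmj : m = j
    · rw [hmj, hτj]
      rcases hss with ⟨hEi, hEj⟩ | ⟨hLi, hLj⟩
      · constructor
        · exact ⟨fun _ => hEj, fun _ => by linarith⟩
        · constructor
          · intro h; exfalso; linarith [hp i, hp j]
          · intro h; exfalso; linarith [hp j]
      · constructor
        · constructor
          · intro h; exfalso; linarith [hp i, hp j]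
          · intro h; exfalso; linarith [hp j]
        · exact ⟨fun _ => hLj, fun _ => by linarith [hp i]⟩
    · rw [hτx m hmi hmj]
      exact ⟨Iff.rfl, Iff.rfl⟩
  have hsub : (univ ×ˢ univ).filter (Pred τ) ⊆ (univ ×ˢ univ).filter (Pred σ) := by
    intro q hq
    obtain ⟨x, y⟩ := q
    rw [hmemS] at hq ⊢
    obtain ⟨h1, h2, h3⟩ := hq
    have h1' : x < y := h1
    have h2' : τ y < τ x := h2
    have hss' : (σ x + p x ≤ T1 ∧ σ y + p y ≤ T1) ∨ (T2 ≤ σ x ∧ T2 ≤ σ y) := by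
      rcases h3 with ⟨hA, hB⟩ | ⟨hA, hB⟩
      · left; exact ⟨(hsideiff x).1.mp hA, (hsideiff y).1.mp hB⟩
      · right; exact ⟨(hsideiff x).2.mp hA, (hsideiff y).2.mp hB⟩
    refine ⟨h1, ?_, hss'⟩
    show σ y < σ x
    by_cases hxi : x = i
    · by_cases hyj : y = j
      · exfalso; rw [hxi, hτi, hyj, hτj] at h2'; linarith [hp i]
      · have hyi : y ≠ i := fun h => h1'.ne (h.trans hxi.symm).symm
        rw [hxi, hτi, hτx y hyi hyj] at h2'
        rcases hsep y hyi hyj with h | h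
        · rw [hxi]; linarith [hp y]
        · exfalso; linarith [hp i]
    by_cases hxj : x = j
    · have hyj : y ≠ j := fun h => h1'.ne (h.trans hxj.symm).symm
      have hyi : y ≠ i := by
        intro h
        rw [hxj, h] at h1'
        exact absurd (lt_trans hij h1') (lt_irrefl i)
      rw [hxj, hτj, hτx y hyi hyj] at h2'
      rcases hsep y hyi hyj with h | h
      · rw [hxj]; linarith [hp y]
      · exfalso; linarith [hp i]
    · by_cases hyi : y = i
      · rw [hyi, hτi, hτx x hxi hxj] at h2'
        rcases hsep x hxi hxj with h | h
        · exfalso; linarith [hp x]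
        · rw [hyi]; linarith [hp i]
      by_cases hyj : y = j
      · rw [hyj, hτj, hτx x hxi hxj] at h2'
        rw [hyj]; linarith [hp i]
      · rw [hτx x hxi hxj, hτx y hyi hyj] at h2'
        exact h2'
  have hmemij : (i, j) ∈ (univ ×ˢ univ).filter (Pred σ) :=
    (hmemS σ (i, j)).mpr ⟨hij, hji, hss⟩
  have hnotmem : (i, j) ∉ (univ ×ˢ univ).filter (Pred τ) := by
    rw [hmemS]
    intro hc
    have h2 : τ j < τ i := hc.2.1
    rw [hτi, hτj] at h2
    linarith [hp i]
  have hlt : InvCount p T1 T2 τ < InvCount p T1 T2 σ := by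
    unfold InvCount
    exact Finset.card_lt_card ⟨hsub, fun hcon => hnotmem (hcon hmemij)⟩
  omega

lemma pinned (p w : Fin n → ℤ) (T1 T2 k : ℤ) (μ : ℚ)
    (hp : ∀ j, 0 < p j) (hw : ∀ j, 0 < w j) (hμ : 0 ≤ μ) {σ : Fin n → ℤ}
    (hadm : Admissible n p T1 T2 k σ)
    (hopt : ∀ τ, Admissible n p T1 T2 k τ → Zval n p w μ σ ≤ Zval n p w μ τ)
    (x : Fin n) (hxE : σ x + p x ≤ T1) (hx1 : 1 ≤ σ x)
    (hnb : ∀ m, ¬(σ m ≤ σ x - 1 ∧ σ x ≤ σ m + p m)) :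
    Corig n p x - (σ x + p x) = Dmax n p σ := by
  obtain ⟨⟨hnn, hdisj, hside⟩, hDk⟩ := hadm
  by_contra hne
  set τ := Function.update σ x (σ x - 1) with hτdef
  have hτx : τ x = σ x - 1 := by rw [hτdef, Function.update_self]
  have hτo : ∀ m, m ≠ x → τ m = σ m := fun m hm => by
    rw [hτdef, Function.update_of_ne hm]
  have hfeas' : Feasible n p T1 T2 τ := by
    refine ⟨?_, ?_, ?_⟩
    · intro m
      by_cases hmx : m = x
      · rw [hmx, hτx]; linarith
      · rw [hτo m hmx]; exact hnn m
    · intro a b hab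
      by_cases hax : a = x
      · have hbx : b ≠ x := fun h => hab (hax.trans h.symm)
        rw [hax, hτx, hτo b hbx]
        rcases hdisj x b (fun h => hbx h.symm) with h | h
        · left; linarith
        · right
          by_contra hcon
          push_neg at hcon
          exact hnb b ⟨by linarith [hp b], by linarith⟩
      by_cases hbx : b = x
      · rw [hbx, hτx, hτo a hax]
        rcases hdisj a x hax with h | h
        · left
          by_contra hcon
          push_neg at hcon
          exact hnb a ⟨by linarith [hp a], by linarith⟩
        · right; linarith
      · rw [hτo a hax, hτo b hbx]
        exact hdisj a b hab
    · intro m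
      by_cases hmx : m = x
      · rw [hmx, hτx]; left; linarith
      · rw [hτo m hmx]; exact hside m
  have hdev : ∀ m, Dev n p τ m ≤ Dmax n p σ := by
    intro m
    by_cases hmx : m = x
    · have hox := abs_le.mp (dev_abs_le_dmax p σ x)
      have hD0 := dmax_nonneg p σ
      rw [hmx]
      unfold Dev
      rw [hτx, abs_le]
      constructor <;> omega
    · unfold Dev
      rw [hτo m hmx]
      exact dev_le_dmax p σ m
  have hDm' : Dmax n p τ ≤ Dmax n p σ := dmax_le (dmax_nonneg p σ) hdev
  have hadm' : Admissible n p T1 T2 k τ := ⟨hfeas', le_trans hDm' hDk⟩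
  have hW : WObj n p w τ < WObj n p w σ := by
    have hupd : ∀ m, m ∉ ({x} : Finset (Fin n)) → τ m = σ m := by
      intro m hm
      exact hτo m (by simpa using hm)
    rw [wobj_diff p w σ τ {x} hupd, Finset.sum_singleton, hτx]
    have := hw x
    nlinarith
  have := hopt τ hadm'
  have := zval_lt_zval p w hμ hDm' hW
  linarith

lemma corig_split (p : Fin n → ℤ) (T1 T2 : ℤ) (hT12 : T1 < T2) (hp : ∀ j, 0 < p j)
    {σ : Fin n → ℤ} (hside : ∀ j, σ j + p j ≤ T1 ∨ T2 ≤ σ j) (x : Fin n) :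
    Corig n p x = p x + (∑ m ∈ univ.filter (fun m => m < x ∧ σ m + p m ≤ T1), p m)
      + (∑ m ∈ univ.filter (fun m => m < x ∧ T2 ≤ σ m), p m) := by
  have hx : univ.filter (fun m => m ≤ x) = insert x (univ.filter (fun m => m < x)) := by
    ext m
    simp only [Finset.mem_insert, Finset.mem_filter, Finset.mem_univ, true_and]
    constructor
    · intro h
      rcases lt_or_eq_of_le h with h' | h'
      · exact Or.inr h'
      · exact Or.inl h'
    · intro h
      rcases h with h' | h'
      · exact le_of_eq h'
      · exact le_of_lt h'
  have h1 : Corig n p x = p x + ∑ m ∈ univ.filter (fun m => m < x), p m := by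
    unfold Corig
    rw [hx, Finset.sum_insert (by simp)]
  have h2 := Finset.sum_filter_add_sum_filter_not
    (univ.filter (fun m => m < x)) (fun m => σ m + p m ≤ T1) p
  rw [Finset.filter_filter, Finset.filter_filter] at h2
  have h3 : univ.filter (fun m => m < x ∧ ¬(σ m + p m ≤ T1))
      = univ.filter (fun m => m < x ∧ T2 ≤ σ m) := by
    apply Finset.filter_congr
    intro m _
    constructor
    · rintro ⟨h4, h5⟩
      exact ⟨h4, (hside m).resolve_left h5⟩
    · rintro ⟨h4, h5⟩
      exact ⟨h4, fun h6 => by linarith [hp m]⟩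
  rw [h3] at h2
  linarith [h2]


lemma idle_consec (p w : Fin n → ℤ) (T1 T2 k : ℤ) (μ : ℚ)
    (hp : ∀ j, 0 < p j) (hw : ∀ j, 0 < w j)
    (hT12 : T1 < T2) (hμ : 0 ≤ μ) {σ : Fin n → ℤ}
    (hadm : Admissible n p T1 T2 k σ)
    (hopt : ∀ τ, Admissible n p T1 T2 k τ → Zval n p w μ σ ≤ Zval n p w μ τ)
    (hEord : ∀ i j : Fin n, i < j → σ i + p i ≤ T1 → σ j + p j ≤ T1 → σ i < σ j) :
    ∀ t1 t2 t : ℤ, IdleUnit n p T1 σ t1 → IdleUnit n p T1 σ t2 → t1 ≤ t → t ≤ t2 →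
      IdleUnit n p T1 σ t := by
  intro t1 t2 t hI1 hI2 ht1 ht2
  obtain ⟨ht1nn, hnb1, j1, hj1E, hj1s⟩ := hI1
  obtain ⟨ht2nn, hnb2, j2, hj2E, hj2s⟩ := hI2
  obtain ⟨hnn, hdisj, hside⟩ := hadm.1
  have hDk : Dmax n p σ ≤ k := hadm.2
  by_contra hnt
  have htnn : (0:ℤ) ≤ t := le_trans ht1nn ht1
  -- t is busy
  have hbt : ∃ m, σ m ≤ t ∧ t + 1 ≤ σ m + p m := by
    by_contra hcon
    exact hnt ⟨htnn, fun m hm => hcon ⟨m, hm⟩, j2, hj2E, by linarith⟩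
  -- greatest non-busy position ≤ t
  have hSne1 : ((Finset.Icc t1 t).filter
      (fun c => ∀ m, ¬(σ m ≤ c ∧ c + 1 ≤ σ m + p m))).Nonempty := by
    refine ⟨t1, ?_⟩
    simp only [Finset.mem_filter, Finset.mem_Icc]
    exact ⟨⟨le_rfl, ht1⟩, hnb1⟩
  set mx := ((Finset.Icc t1 t).filter
    (fun c => ∀ m, ¬(σ m ≤ c ∧ c + 1 ≤ σ m + p m))).max' hSne1 with hmxdef
  have hmxmem := Finset.max'_mem _ hSne1
  rw [← hmxdef] at hmxmem
  simp only [Finset.mem_filter, Finset.mem_Icc] at hmxmem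
  obtain ⟨⟨hmxt1, hmxt⟩, hmxnb⟩ := hmxmem
  have hmxmax : ∀ c, t1 ≤ c → c ≤ t → (∀ m, ¬(σ m ≤ c ∧ c + 1 ≤ σ m + p m)) → c ≤ mx := by
    intro c h1 h2 h3
    apply Finset.le_max'
    simp only [Finset.mem_filter, Finset.mem_Icc]
    exact ⟨⟨h1, h2⟩, h3⟩
  -- least non-busy position ≥ t
  have hSne2 : ((Finset.Icc t t2).filter
      (fun c => ∀ m, ¬(σ m ≤ c ∧ c + 1 ≤ σ m + p m))).Nonempty := by
    refine ⟨t2, ?_⟩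
    simp only [Finset.mem_filter, Finset.mem_Icc]
    exact ⟨⟨ht2, le_rfl⟩, hnb2⟩
  set f := ((Finset.Icc t t2).filter
    (fun c => ∀ m, ¬(σ m ≤ c ∧ c + 1 ≤ σ m + p m))).min' hSne2 with hfdef
  have hfmem := Finset.min'_mem _ hSne2
  rw [← hfdef] at hfmem
  simp only [Finset.mem_filter, Finset.mem_Icc] at hfmem
  obtain ⟨⟨hft, hft2⟩, hfnb⟩ := hfmem
  have hfmin : ∀ c, t ≤ c → c ≤ t2 → (∀ m, ¬(σ m ≤ c ∧ c + 1 ≤ σ m + p m)) → f ≤ c := by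
    intro c h1 h2 h3
    apply Finset.min'_le
    simp only [Finset.mem_filter, Finset.mem_Icc]
    exact ⟨⟨h1, h2⟩, h3⟩
  have hmxlt : mx < t := by
    rcases eq_or_lt_of_le hmxt with h | h
    · exfalso
      obtain ⟨m, hm⟩ := hbt
      rw [h] at hmxnb
      exact hmxnb m hm
    · exact h
  have hflt : t < f := by
    rcases eq_or_lt_of_le hft with h | h
    · exfalso
      obtain ⟨m, hm⟩ := hbt
      rw [← h] at hfnb
      exact hfnb m hm
    · exact h
  -- everything in (mx, f) is busy
  have hbusy : ∀ u, mx < u → u < f → ∃ m, σ m ≤ u ∧ u + 1 ≤ σ m + p m := by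
    intro u hu1 hu2
    by_contra hcon
    have hcon' : ∀ m, ¬(σ m ≤ u ∧ u + 1 ≤ σ m + p m) := fun m hm => hcon ⟨m, hm⟩
    by_cases hut : u ≤ t
    · have := hmxmax u (by linarith) hut hcon'
      linarith
    · push_neg at hut
      have := hfmin u (by linarith) (by linarith) hcon'
      linarith
  -- the first job of the block containing t
  obtain ⟨e1, he1s, he1c⟩ := hbusy (mx + 1) (by linarith) (by linarith)
  have he1σ : σ e1 = mx + 1 := by
    rcases eq_or_lt_of_le he1s with h | h
    · exact h
    · exfalso
      exact hmxnb e1 ⟨by linarith, by linarith⟩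
  have he1E : σ e1 + p e1 ≤ T1 := by
    rcases hside e1 with h | h
    · exact h
    · exfalso
      linarith [hp j2]
  -- the first earlier job after f
  have hF2ne : (univ.filter (fun m => σ m + p m ≤ T1 ∧ f ≤ σ m)).Nonempty := by
    refine ⟨j2, ?_⟩
    simp only [Finset.mem_filter, Finset.mem_univ, true_and]
    exact ⟨hj2E, by linarith⟩
  obtain ⟨e2, he2mem, he2min'⟩ :=
    Finset.exists_min_image (univ.filter (fun m => σ m + p m ≤ T1 ∧ f ≤ σ m)) σ hF2ne
  simp only [Finset.mem_filter, Finset.mem_univ, true_and] at he2mem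
  obtain ⟨he2E, he2f⟩ := he2mem
  have he2min : ∀ y : Fin n, σ y + p y ≤ T1 → f ≤ σ y → σ e2 ≤ σ y := by
    intro y h1 h2
    apply he2min'
    simp only [Finset.mem_filter, Finset.mem_univ, true_and]
    exact ⟨h1, h2⟩
  have hfe2 : f + 1 ≤ σ e2 := by
    rcases eq_or_lt_of_le he2f with h | h
    · exfalso
      exact hfnb e2 ⟨h.symm.le, by linarith [hp e2, h]⟩
    · exact h
  -- earlier jobs starting before σ e2 finish by f
  have hEC : ∀ y : Fin n, σ y + p y ≤ T1 → σ y < σ e2 → σ y + p y ≤ f := by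
    intro y hyE hyσ
    have hyf : σ y < f := by
      by_contra hcon
      push_neg at hcon
      have := he2min y hyE hcon
      linarith
    by_contra hcon
    push_neg at hcon
    exact hfnb y ⟨by linarith, by linarith⟩
  -- pinned deviations
  have pin1 : Corig n p e1 - (σ e1 + p e1) = Dmax n p σ := by
    apply pinned p w T1 T2 k μ hp hw hμ hadm hopt e1 he1E (by rw [he1σ]; linarith)
    intro m hm
    rw [he1σ] at hm
    exact hmxnb m ⟨by linarith [hm.1], by linarith [hm.2]⟩
  have pin2 : Corig n p e2 - (σ e2 + p e2) = Dmax n p σ := by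
    apply pinned p w T1 T2 k μ hp hw hμ hadm hopt e2 he2E (by linarith)
    intro m hm
    rcases hside m with hE | hL
    · have := hEC m hE (by linarith [hm.1, hp m])
      linarith [hm.2]
    · linarith [hm.1, hm.2, hp e2]
  have he12 : e1 < e2 := by
    rcases lt_trichotomy e1 e2 with h | h | h
    · exact h
    · exfalso; rw [h] at he1σ; linarith
    · exfalso
      have := hEord e2 e1 h he2E he1E
      linarith
  -- the block between mx+1 and f tiles exactly
  set B := univ.filter (fun m => σ m + p m ≤ T1 ∧ mx + 1 ≤ σ m ∧ σ m < σ e2) with hB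
  have htile : ∑ m ∈ B, p m = f - (mx + 1) := by
    have hdisjI : ∀ a ∈ B, ∀ b ∈ B, a ≠ b →
        Disjoint (Finset.Ico (σ a) (σ a + p a)) (Finset.Ico (σ b) (σ b + p b)) := by
      intro a _ b _ hab
      rw [Finset.disjoint_left]
      intro u hu hu'
      simp only [Finset.mem_Ico] at hu hu'
      rcases hdisj a b hab with h | h <;> omega
    have hunion : B.biUnion (fun m => Finset.Ico (σ m) (σ m + p m))
        = Finset.Ico (mx + 1) f := by
      apply Finset.Subset.antisymm
      · intro u hu
        simp only [Finset.mem_biUnion] at hu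
        obtain ⟨m, hmB, hum⟩ := hu
        simp only [hB, Finset.mem_filter, Finset.mem_univ, true_and] at hmB
        obtain ⟨hmE, hms, hmσ⟩ := hmB
        have hCm : σ m + p m ≤ f := hEC m hmE hmσ
        simp only [Finset.mem_Ico] at hum ⊢
        omega
      · intro u hu
        simp only [Finset.mem_Ico] at hu
        obtain ⟨m, hm1, hm2⟩ := hbusy u (by linarith [hu.1]) hu.2
        have hmE : σ m + p m ≤ T1 := by
          rcases hside m with h | h
          · exact h
          · exfalso
            linarith [hp e2, hu.2]
        have hms : mx + 1 ≤ σ m := by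
          by_contra hcon
          push_neg at hcon
          exact hmxnb m ⟨by linarith, by linarith [hu.1]⟩
        simp only [Finset.mem_biUnion]
        refine ⟨m, ?_, ?_⟩
        · simp only [hB, Finset.mem_filter, Finset.mem_univ, true_and]
          exact ⟨hmE, hms, by linarith [hu.2, hfe2]⟩
        · simp only [Finset.mem_Ico]
          omega
    have hcard := Finset.card_biUnion hdisjI
    rw [hunion] at hcard
    have hsum : ∑ m ∈ B, p m = ∑ m ∈ B, ((Finset.Ico (σ m) (σ m + p m)).card : ℤ) := by
      apply Finset.sum_congr rfl
      intro m _
      rw [Int.card_Ico]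
      have h1 : σ m + p m - σ m = p m := by ring
      rw [h1, Int.toNat_of_nonneg (hp m).le]
    rw [hsum]
    rw [← Nat.cast_sum, ← hcard, Int.card_Ico, Int.toNat_of_nonneg (by linarith)]
  -- decompositions of Corig
  have hsplit1 := corig_split p T1 T2 hT12 hp hside e1
  have hsplit2 := corig_split p T1 T2 hT12 hp hside e2
  have hEsum : (∑ m ∈ univ.filter (fun m => m < e2 ∧ σ m + p m ≤ T1), p m)
      = (∑ m ∈ univ.filter (fun m => m < e1 ∧ σ m + p m ≤ T1), p m) + (f - (mx + 1)) := by
    have h2 := Finset.sum_filter_add_sum_filter_not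
      (univ.filter (fun m => m < e2 ∧ σ m + p m ≤ T1)) (fun m => m < e1) p
    rw [Finset.filter_filter, Finset.filter_filter] at h2
    have hA : univ.filter (fun m => (m < e2 ∧ σ m + p m ≤ T1) ∧ m < e1)
        = univ.filter (fun m => m < e1 ∧ σ m + p m ≤ T1) := by
      apply Finset.filter_congr
      intro m _
      constructor
      · rintro ⟨⟨_, hE⟩, hlt⟩
        exact ⟨hlt, hE⟩
      · rintro ⟨hlt, hE⟩
        exact ⟨⟨lt_trans hlt he12, hE⟩, hlt⟩
    have hBeq : univ.filter (fun m => (m < e2 ∧ σ m + p m ≤ T1) ∧ ¬ m < e1) = B := by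
      rw [hB]
      apply Finset.filter_congr
      intro m _
      constructor
      · rintro ⟨⟨hlt2, hE⟩, hnlt⟩
        refine ⟨hE, ?_, hEord m e2 hlt2 hE he2E⟩
        rcases eq_or_lt_of_le (not_lt.mp hnlt) with h | h
        · rw [← he1σ]
          exact le_of_eq (congrArg σ h)
        · have := hEord e1 m h he1E hE
          linarith
      · rintro ⟨hE, hs, hσ⟩
        have hme2 : m < e2 := by
          rcases lt_trichotomy m e2 with h | h | h
          · exact h
          · exfalso; rw [h] at hσ; exact lt_irrefl _ hσ
          · exfalso; linarith [hEord e2 m h he2E hE]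
        refine ⟨⟨hme2, hE⟩, ?_⟩
        intro hlt
        linarith [hEord m e1 hlt hE he1E]
    rw [hA, hBeq, htile] at h2
    linarith
  set V := univ.filter (fun m => T2 ≤ σ m ∧ e1 < m ∧ m < e2) with hV
  have hLsum : (∑ m ∈ univ.filter (fun m => m < e2 ∧ T2 ≤ σ m), p m)
      = (∑ m ∈ univ.filter (fun m => m < e1 ∧ T2 ≤ σ m), p m) + ∑ m ∈ V, p m := by
    have h2 := Finset.sum_filter_add_sum_filter_not
      (univ.filter (fun m => m < e2 ∧ T2 ≤ σ m)) (fun m => m < e1) p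
    rw [Finset.filter_filter, Finset.filter_filter] at h2
    have hA : univ.filter (fun m => (m < e2 ∧ T2 ≤ σ m) ∧ m < e1)
        = univ.filter (fun m => m < e1 ∧ T2 ≤ σ m) := by
      apply Finset.filter_congr
      intro m _
      constructor
      · rintro ⟨⟨_, hL⟩, hlt⟩
        exact ⟨hlt, hL⟩
      · rintro ⟨hlt, hL⟩
        exact ⟨⟨lt_trans hlt he12, hL⟩, hlt⟩
    have hBeq : univ.filter (fun m => (m < e2 ∧ T2 ≤ σ m) ∧ ¬ m < e1) = V := by
      rw [hV]
      apply Finset.filter_congr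
      intro m _
      constructor
      · rintro ⟨⟨hlt2, hL⟩, hnlt⟩
        refine ⟨hL, ?_, hlt2⟩
        rcases eq_or_lt_of_le (not_lt.mp hnlt) with h | h
        · exfalso
          rw [← h] at hL
          linarith [hp e1]
        · exact h
      · rintro ⟨hL, h1, h2'⟩
        exact ⟨⟨h2', hL⟩, fun hc => absurd (lt_trans hc h1) (lt_irrefl _)⟩
    rw [hA, hBeq] at h2
    linarith
  have hVsum : ∑ m ∈ V, p m = σ e2 - f := by
    linarith [pin1, pin2, hsplit1, hsplit2, hEsum, hLsum, he1σ]
  have hVne : V.Nonempty := by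
    rcases V.eq_empty_or_nonempty with h | h
    · exfalso
      rw [h, Finset.sum_empty] at hVsum
      linarith
    · exact h
  have hVmem : ∀ m ∈ V, T2 ≤ σ m ∧ e1 < m ∧ m < e2 := by
    intro m hm
    simpa only [hV, Finset.mem_filter, Finset.mem_univ, true_and] using hm
  -- the new schedule: insert V into the gap (f, σ e2)
  set τ := fun m => if m ∈ V then σ e2 - (∑ x ∈ V.filter (fun x => m ≤ x), p x) else σ m
    with hτdef
  have hτV : ∀ m ∈ V, τ m = σ e2 - (∑ x ∈ V.filter (fun x => m ≤ x), p x) := by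
    intro m hm
    simp only [hτdef]
    rw [if_pos hm]
  have hτo : ∀ m, m ∉ V → τ m = σ m := by
    intro m hm
    simp only [hτdef]
    rw [if_neg hm]
  have hsum_split : ∀ m ∈ V, (∑ x ∈ V.filter (fun x => m ≤ x), p x)
      = p m + (∑ x ∈ V.filter (fun x => m < x), p x) := by
    intro m hm
    have hins : V.filter (fun x => m ≤ x) = insert m (V.filter (fun x => m < x)) := by
      ext y
      simp only [Finset.mem_filter, Finset.mem_insert]
      constructor
      · rintro ⟨hyV, hy⟩
        rcases eq_or_lt_of_le hy with h | h
        · exact Or.inl h.symm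
        · exact Or.inr ⟨hyV, h⟩
      · rintro (rfl | ⟨hyV, hy⟩)
        · exact ⟨hm, le_rfl⟩
        · exact ⟨hyV, hy.le⟩
    rw [hins, Finset.sum_insert (by simp)]
  have hτlow : ∀ m ∈ V, f ≤ τ m := by
    intro m hm
    rw [hτV m hm]
    have := Finset.sum_le_sum_of_subset_of_nonneg
      (Finset.filter_subset (fun x => m ≤ x) V) (fun x _ _ => (hp x).le)
    linarith
  have hτhigh : ∀ m ∈ V, τ m + p m ≤ σ e2 := by
    intro m hm
    rw [hτV m hm, hsum_split m hm]
    have : (0:ℤ) ≤ ∑ x ∈ V.filter (fun x => m < x), p x :=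
      Finset.sum_nonneg (fun x _ => (hp x).le)
    linarith
  have hchain : ∀ m ∈ V, ∀ m' ∈ V, m < m' →
      p m' + (∑ x ∈ V.filter (fun x => m' < x), p x)
        ≤ ∑ x ∈ V.filter (fun x => m < x), p x := by
    intro m hm m' hm' hmm'
    have hins : insert m' (V.filter (fun x => m' < x)) ⊆ V.filter (fun x => m < x) := by
      intro y hy
      simp only [Finset.mem_insert, Finset.mem_filter] at hy ⊢
      rcases hy with rfl | ⟨h1, h2⟩
      · exact ⟨hm', hmm'⟩
      · exact ⟨h1, lt_trans hmm' h2⟩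
    have h1 : ∑ x ∈ insert m' (V.filter (fun x => m' < x)), p x
        = p m' + ∑ x ∈ V.filter (fun x => m' < x), p x := Finset.sum_insert (by simp)
    rw [← h1]
    exact Finset.sum_le_sum_of_subset_of_nonneg hins (fun x _ _ => (hp x).le)
  have hτfeas : Feasible n p T1 T2 τ := by
    refine ⟨?_, ?_, ?_⟩
    · intro m
      by_cases hm : m ∈ V
      · linarith [hτlow m hm]
      · rw [hτo m hm]; exact hnn m
    · intro a b hab
      by_cases ha : a ∈ V <;> by_cases hb' : b ∈ V
      · rcases lt_trichotomy a b with h | h | h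
        · left
          rw [hτV a ha, hτV b hb', hsum_split a ha, hsum_split b hb']
          linarith [hchain a ha b hb' h]
        · exact absurd h hab
        · right
          rw [hτV a ha, hτV b hb', hsum_split a ha, hsum_split b hb']
          linarith [hchain b hb' a ha h]
      · rw [hτo b hb']
        rcases hside b with hEb | hLb
        · by_cases hbσ : σ b < σ e2
          · right
            linarith [hEC b hEb hbσ, hτlow a ha]
          · left
            push_neg at hbσ
            linarith [hτhigh a ha]
        · left
          linarith [hτhigh a ha, hp e2]
      · rw [hτo a ha]
        rcases hside a with hEa | hLa
        · by_cases haσ : σ a < σ e2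
          · left
            linarith [hEC a hEa haσ, hτlow b hb']
          · right
            push_neg at haσ
            linarith [hτhigh b hb']
        · right
          linarith [hτhigh b hb', hp e2]
      · rw [hτo a ha, hτo b hb']
        exact hdisj a b hab
    · intro m
      by_cases hm : m ∈ V
      · left
        linarith [hτhigh m hm, hp e2]
      · rw [hτo m hm]; exact hside m
  have hdiff2 : ∀ m ∈ V, Corig n p m + (∑ x ∈ V.filter (fun x => m < x), p x) + p e2
      ≤ Corig n p e2 := by
    intro m hm
    obtain ⟨hmL, hme1, hme2⟩ := hVmem m hm
    have hcd := corig_diff p hme2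
    have he2nV : e2 ∉ V.filter (fun x => m < x) := by
      intro hc
      obtain ⟨_, _, h⟩ := hVmem e2 (Finset.mem_of_mem_filter _ hc)
      exact lt_irrefl _ h
    have hsubs : insert e2 (V.filter (fun x => m < x))
        ⊆ univ.filter (fun i => m < i ∧ i ≤ e2) := by
      intro y hy
      simp only [Finset.mem_insert, Finset.mem_filter, Finset.mem_univ, true_and] at hy ⊢
      rcases hy with rfl | ⟨h1, h2⟩
      · exact ⟨hme2, le_rfl⟩
      · obtain ⟨_, _, hy2⟩ := hVmem y h1
        exact ⟨h2, hy2.le⟩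
    have h1 : ∑ x ∈ insert e2 (V.filter (fun x => m < x)), p x
        = p e2 + ∑ x ∈ V.filter (fun x => m < x), p x := Finset.sum_insert he2nV
    have h2 := Finset.sum_le_sum_of_subset_of_nonneg hsubs (fun x _ _ => (hp x).le)
    rw [h1] at h2
    linarith
  have hdev : ∀ m, Dev n p τ m ≤ Dmax n p σ := by
    intro m
    by_cases hm : m ∈ V
    · obtain ⟨hmL, hme1, hme2⟩ := hVmem m hm
      have hdevm := abs_le.mp (dev_abs_le_dmax p σ m)
      unfold Dev
      rw [hτV m hm, hsum_split m hm, abs_le]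
      have hnn' : (0:ℤ) ≤ ∑ x ∈ V.filter (fun x => m < x), p x :=
        Finset.sum_nonneg (fun x _ => (hp x).le)
      constructor
      · linarith [hdiff2 m hm, pin2]
      · linarith [hp e2, hp m, hdevm.2]
    · unfold Dev
      rw [hτo m hm]
      exact dev_le_dmax p σ m
  have hDm' : Dmax n p τ ≤ Dmax n p σ := dmax_le (dmax_nonneg p σ) hdev
  have hadm' : Admissible n p T1 T2 k τ := ⟨hτfeas, le_trans hDm' hDk⟩
  have hW : WObj n p w τ < WObj n p w σ := by
    rw [wobj_diff p w σ τ V hτo]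
    have hterm : ∀ m ∈ V, w m * (τ m - σ m) < (fun _ => (0:ℤ)) m := by
      intro m hm
      obtain ⟨hmL, _, _⟩ := hVmem m hm
      have h1 : τ m < σ m := by linarith [hτhigh m hm, hp m, hp e2]
      exact mul_neg_of_pos_of_neg (hw m) (by linarith)
    have hsumneg := Finset.sum_lt_sum_of_nonempty hVne hterm
    rw [Finset.sum_const_zero] at hsumneg
    linarith
  have hZ := zval_lt_zval p w hμ hDm' hW
  linarith [hopt τ hadm']

end Stmt2

/-- there exists an optimal schedule with both halves in WSPT
order whose earlier-schedule idle time units form a set of consecutive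
integers (at most one idle period in the earlier schedule). -/
theorem stmt_2 (n : ℕ) (p w : Fin n → ℤ) (T1 T2 k : ℤ) (μ : ℚ)
    (hn : 0 < n) (hp : ∀ j, 0 < p j) (hw : ∀ j, 0 < w j)
    (hwspt : ∀ i j : Fin n, i ≤ j → p i * w j ≤ p j * w i)
    (hT1 : 0 ≤ T1) (hT12 : T1 < T2) (hk : 0 ≤ k) (hμ : 0 ≤ μ)
    (hadm : ∃ σ, Admissible n p T1 T2 k σ) :
    ∃ σ, Optimal n p w T1 T2 k μ σ ∧
      (∀ i j : Fin n, i < j → σ i + p i ≤ T1 → σ j + p j ≤ T1 → σ i < σ j) ∧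
      (∀ i j : Fin n, i < j → T2 ≤ σ i → T2 ≤ σ j → σ i < σ j) ∧
      (∀ t1 t2 t : ℤ, IdleUnit n p T1 σ t1 → IdleUnit n p T1 σ t2 →
        t1 ≤ t → t ≤ t2 → IdleUnit n p T1 σ t) := by
  obtain ⟨σ, hadmσ, hopt, hinv⟩ := Stmt2.exists_opt p w T1 T2 k μ hp hadm
  have hord := Stmt2.no_inversion p w T1 T2 k μ hp hw hwspt hT12 hμ hadmσ hopt hinv
  refine ⟨σ, ⟨hadmσ, hopt⟩, ?_, ?_, ?_⟩
  · intro i j hij hEi hEj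
    exact hord i j hij (Or.inl ⟨hEi, hEj⟩)
  · intro i j hij hLi hLj
    exact hord i j hij (Or.inr ⟨hLi, hLj⟩)
  · intro t1 t2 t h1 h2 hle1 hle2
    exact Stmt2.idle_consec p w T1 T2 k μ hp hw hT12 hμ hadmσ hopt
      (fun i j hij hEi hEj => hord i j hij (Or.inl ⟨hEi, hEj⟩)) t1 t2 t h1 h2 hle1 hle2
end
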